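/- arXiv:2008.12634 — 2 statements merged into one kernel-verified Lean document; each statement's English description precedes it below -/
import Mathlib

section
/- For every integer j with 0 < j < 4n, the induced map r̄^j on A = A'/⟨w⟩ is not a translation: there is no element a ∈ A such that r̄^j(x) = x + a for all x ∈ A. -/
/-!
Since `r = R + (0, …, 0, c)` with `R` additive, if `r̄^j` were translation by `a` then
`R^j z - z ∈ ⟨w⟩` for every `z ∈ A'`; as `2w = 0`, this forces `2 (R^j z - z) = 0`.
`R` acts on `E^{2n}` as the signed cyclic shift of order `4n`, so for `z = (1/3, 0, …, 0)` the
first coordinate of `R^j z - z` is `-1/3`, or `-2/3` when `j = 2n`. Twice either is a real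
non-integer, which does not lie in `ℤ + ℤτ` because `Im τ ≠ 0`.
-/

noncomputable section

/-- The lattice Λ = ℤ + ℤτ as an additive subgroup of ℂ. -/
def Lam (τ : ℂ) : AddSubgroup ℂ := AddSubgroup.closure {1, τ}

/-- The "elliptic curve" E = ℂ/(ℤ + ℤτ) as an additive group. -/
abbrev Ell (τ : ℂ) : Type := ℂ ⧸ Lam τ

/-- A' = E^{2n} × E'. -/
abbrev Aprime (n : ℕ) (τ τ' : ℂ) : Type := (Fin (2*n) → Ell τ) × Ell τ'

/-- w = (1/2, 1/2, ..., 1/2, 0) ∈ A'. -/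
def wpt (n : ℕ) (τ τ' : ℂ) : Aprime n τ τ' :=
  (fun _ => ((1/2 : ℂ) : Ell τ), 0)

/-- The subgroup ⟨w⟩ of A' generated by w. -/
def wsub (n : ℕ) (τ τ' : ℂ) : AddSubgroup (Aprime n τ τ') :=
  AddSubgroup.closure {wpt n τ τ'}

/-- A = A'/⟨w⟩. -/
abbrev Aq (n : ℕ) (τ τ' : ℂ) : Type := Aprime n τ τ' ⧸ wsub n τ τ'

/-- R(z₁,...,z_{2n},z_{2n+1}) = (-z_{2n}, z₁, ..., z_{2n-1}, z_{2n+1}). -/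
def Rmap (n : ℕ) (τ τ' : ℂ) : Aprime n τ τ' → Aprime n τ τ' :=
  fun z => (fun i =>
    if i.val = 0 then -z.1 ⟨2*n-1, by have := i.isLt; omega⟩
    else z.1 ⟨i.val - 1, by have := i.isLt; omega⟩, z.2)

/-- The class of 1/(4n) in E'. -/
def cE' (n : ℕ) (τ' : ℂ) : Ell τ' := ((1/(4*(n : ℂ)) : ℂ) : Ell τ')

/-- r(z) = R(z) + (0, ..., 0, 1/(4n)). -/
def rmap (n : ℕ) (τ τ' : ℂ) : Aprime n τ τ' → Aprime n τ τ' :=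
  fun z => ((Rmap n τ τ' z).1, (Rmap n τ τ' z).2 + cE' n τ')

/-- The translation vector b: b_{2i-1} = 1/2 + τ/2, b_{2i} = τ/2 (1-indexed),
i.e. in 0-indexed terms, even indices carry 1/2 + τ/2 and odd indices carry τ/2. -/
def bvec (n : ℕ) (τ : ℂ) : Fin (2*n) → Ell τ :=
  fun i => if i.val % 2 = 0 then ((1/2 + τ/2 : ℂ) : Ell τ) else ((τ/2 : ℂ) : Ell τ)

/-- S(z₁,...,z_{2n},z_{2n+1}) = (-z_{2n}, -z_{2n-1}, ..., -z₁, -z_{2n+1}). -/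
def Smap (n : ℕ) (τ τ' : ℂ) : Aprime n τ τ' → Aprime n τ τ' :=
  fun z => (fun i => -z.1 ⟨2*n-1-i.val, by have := i.isLt; omega⟩, -z.2)

/-- s(z) = S(z) + (b₁, ..., b_{2n}, 0). -/
def smap (n : ℕ) (τ τ' : ℂ) : Aprime n τ τ' → Aprime n τ τ' :=
  fun z => (fun i => -z.1 ⟨2*n-1-i.val, by have := i.isLt; omega⟩ + bvec n τ i, -z.2)

theorem exists_int_eq_of_ofReal_mem_Lam {τ : ℂ} (hτ : τ.im ≠ 0) {r : ℝ} (hr : (r : ℂ) ∈ Lam τ) :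
    ∃ k : ℤ, r = k := by
  obtain ⟨k, m, hkm⟩ := AddSubgroup.mem_closure_pair.mp hr
  have hm : (m : ℝ) = 0 := by simpa [hτ] using congrArg Complex.im hkm
  exact ⟨k, by simpa [hm] using (congrArg Complex.re hkm).symm⟩

theorem zsmul_inv_three_ne_zero {τ : ℂ} (hτ : τ.im ≠ 0) {m : ℤ} (hm : ¬ (3 : ℤ) ∣ m) :
    m • (((3 : ℂ)⁻¹ : ℂ) : Ell τ) ≠ 0 := by
  rw [← QuotientAddGroup.mk_zsmul, Ne, QuotientAddGroup.eq_zero_iff]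
  intro h
  obtain ⟨k, hk⟩ := exists_int_eq_of_ofReal_mem_Lam hτ (r := m / 3)
    (by simpa [zsmul_eq_mul, div_eq_mul_inv] using h)
  have : (m : ℝ) = 3 * k := by rw [← hk]; ring
  exact hm ⟨k, by exact_mod_cast this⟩

theorem two_nsmul_eq_zero_of_mem_wsub {n : ℕ} {τ τ' : ℂ} {p : Aprime n τ τ'}
    (hp : p ∈ wsub n τ τ') : 2 • p = 0 := by
  obtain ⟨k, rfl⟩ := AddSubgroup.mem_closure_singleton.mp hp
  have hw : 2 • wpt n τ τ' = 0 := by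
    refine Prod.ext (funext fun _ => ?_) (smul_zero _)
    rw [Prod.smul_fst, Pi.smul_apply, wpt, ← QuotientAddGroup.mk_nsmul]
    refine (QuotientAddGroup.eq_zero_iff _).mpr ?_
    norm_num
    exact AddSubgroup.subset_closure (Set.mem_insert _ _)
  rw [smul_comm, hw, smul_zero]

theorem iterate_sub_iterate {G : Type*} [AddGroup G] {f : G → G} {g : G →+ G}
    (hfg : ∀ x y, f x - f y = g (x - y)) (j : ℕ) (x y : G) :
    f^[j] x - f^[j] y = (⇑g)^[j] (x - y) := by
  induction j with
  | zero => rfl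
  | succ j ih => rw [Function.iterate_succ_apply', Function.iterate_succ_apply',
      Function.iterate_succ_apply', hfg, ih]

theorem sub_mem_of_translation {G : Type*} [AddCommGroup G] {H : AddSubgroup G}
    {f g : G → G} {fbar : G ⧸ H → G ⧸ H} (hsemi : Function.Semiconj (↑) f fbar)
    (hfg : ∀ x y, f x - f y = g (x - y)) {a : G ⧸ H} (ha : ∀ x, fbar x = x + a) (x : G) :
    g x - x ∈ H := by
  have hg := hfg x 0
  rw [sub_zero] at hg
  rw [← hg, ← QuotientAddGroup.eq_iff_sub_mem, QuotientAddGroup.mk_sub, hsemi x, hsemi 0, ha, ha,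
    QuotientAddGroup.mk_zero]
  abel

def RmapHom (n : ℕ) (τ τ' : ℂ) : Aprime n τ τ' →+ Aprime n τ τ' :=
  AddMonoidHom.mk' (Rmap n τ τ') fun z z' => by
    refine Prod.ext (funext fun i => ?_) rfl
    by_cases h : (i : ℕ) = 0 <;> simp [Rmap, h, add_comm]

theorem coe_RmapHom (n : ℕ) (τ τ' : ℂ) : ⇑(RmapHom n τ τ') = Rmap n τ τ' := rfl

theorem rmap_sub_rmap (n : ℕ) (τ τ' : ℂ) (z z' : Aprime n τ τ') :
    rmap n τ τ' z - rmap n τ τ' z' = RmapHom n τ τ' (z - z') := by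
  rw [map_sub]
  exact Prod.ext rfl (add_sub_add_right_eq_sub _ _ _)

def singleZero {τ : ℂ} (n : ℕ) (τ' : ℂ) (x : Ell τ) : Aprime n τ τ' :=
  (fun i => if (i : ℕ) = 0 then x else 0, 0)

theorem Rmap_iterate_singleZero_fst {n : ℕ} {τ τ' : ℂ} (x : Ell τ) {j : ℕ} (hj : j < 4 * n)
    (i : Fin (2 * n)) :
    ((Rmap n τ τ')^[j] (singleZero n τ' x)).1 i =
      if (i : ℕ) = j then x else if (i : ℕ) + 2 * n = j then -x else 0 := by
  induction j generalizing i with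
  | zero => simp [singleZero, show n ≠ 0 by omega]
  | succ j ih =>
    rw [Function.iterate_succ_apply']
    simp only [Rmap]
    split_ifs <;> rw [ih (by omega)] <;> split_ifs <;> simp only at * <;> first | omega | simp

theorem stmt_7_general (n : ℕ) (τ τ' : ℂ) (hτ : τ.im ≠ 0) :
    ∀ rbar : Aq n τ τ' → Aq n τ τ',
      (∀ z : Aprime n τ τ',
        rbar (z : Aq n τ τ') = ((rmap n τ τ' z : Aprime n τ τ') : Aq n τ τ')) →
      ∀ j : ℕ, 0 < j → j < 4*n →
        ¬ ∃ a : Aq n τ τ', ∀ x : Aq n τ τ', rbar^[j] x = x + a := by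
  intro rbar hrbar j hj0 hj4 ⟨a, ha⟩
  have hsemi : Function.Semiconj (↑) ((rmap n τ τ')^[j]) rbar^[j] :=
    Function.Semiconj.iterate_right (fun z => (hrbar z).symm) j
  set x : Ell τ := (((3 : ℂ)⁻¹ : ℂ) : Ell τ)
  have hmem := sub_mem_of_translation hsemi (iterate_sub_iterate (rmap_sub_rmap n τ τ') j) ha
    (singleZero n τ' x)
  have h0 := congrArg (fun p => p.1 ⟨0, by omega⟩) (two_nsmul_eq_zero_of_mem_wsub hmem)
  simp only [coe_RmapHom, Prod.smul_fst, Prod.fst_sub, Pi.smul_apply, Pi.sub_apply,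
    Rmap_iterate_singleZero_fst x hj4, Prod.fst_zero, Pi.zero_apply] at h0
  simp only [singleZero, if_true, hj0.ne, if_false, zero_add] at h0
  rcases eq_or_ne (2 * n) j with hj | hj
  · refine zsmul_inv_three_ne_zero hτ (m := -4) (by decide) ?_
    rw [← h0, if_pos hj]
    abel
  · refine zsmul_inv_three_ne_zero hτ (m := -2) (by decide) ?_
    rw [← h0, if_neg hj]
    abel

/-- for 0 < j < 4n, r̄^j is not a translation of A. -/
theorem stmt_7 (n : ℕ) (hn : 1 ≤ n) (τ τ' : ℂ) (hτ : τ.im ≠ 0) (hτ' : τ'.im ≠ 0) :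
    ∀ rbar : Aq n τ τ' → Aq n τ τ',
      (∀ z : Aprime n τ τ',
        rbar (z : Aq n τ τ') = ((rmap n τ τ' z : Aprime n τ τ') : Aq n τ τ')) →
      ∀ j : ℕ, 0 < j → j < 4*n →
        ¬ ∃ a : Aq n τ τ', ∀ x : Aq n τ τ', rbar^[j] x = x + a :=
  stmt_7_general n τ τ' hτ
end
end

section
/- Neither s̄ nor r̄ ∘ s̄ is a translation of A = A'/⟨w⟩: there is no element a ∈ A such that s̄(x) = x + a for all x ∈ A, and there is no element a ∈ A such that (r̄ ∘ s̄)(x) = x + a for all x ∈ A. -/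
/-!
The last coordinate `E'` survives the quotient by `⟨w⟩`, and on it both `s̄` and `r̄ ∘ s̄` act as
`z ↦ -z + c`, whereas a translation acts as `z ↦ z + c'`. Comparing `z = 0` with `z = 1/4` would
force `1/2 ∈ ℤ + ℤτ'`, impossible since `τ'` is not real.
-/

noncomputable section

theorem not_exists_add_right_of_map_eq_neg_add {G K : Type*} [AddCommGroup G] [AddCommGroup K]
    (π : G →+ K) (hπ : Function.Surjective π) {f : G → G} {c : K}
    (hf : ∀ x, π (f x) = -π x + c) {k : K} (hk : k + k ≠ 0) :
    ¬ ∃ a, ∀ x, f x = x + a := by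
  rintro ⟨a, ha⟩
  have hfa : ∀ x, -π x + c = π x + π a := fun x => by rw [← hf, ha, map_add]
  obtain ⟨x₀, hx₀⟩ := hπ 0
  obtain ⟨x, hx⟩ := hπ k
  have hc : c = π a := by simpa [hx₀] using hfa x₀
  have hkx : -k + π a = k + π a := by simpa only [hx, hc] using hfa x
  exact hk (neg_eq_iff_add_eq_zero.mp (add_right_cancel hkx))

theorem half_notMem_Lam {τ : ℂ} (hτ : τ.im ≠ 0) : (1 / 2 : ℂ) ∉ Lam τ := by
  rw [Lam, AddSubgroup.mem_closure_pair]
  rintro ⟨m, k, h⟩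
  have hk : k = 0 := by
    have him := congrArg Complex.im h
    simp only [zsmul_eq_mul, Complex.add_im, Complex.mul_im, Complex.intCast_re,
      Complex.intCast_im, Complex.one_im, Complex.one_re, mul_zero, zero_mul, add_zero,
      zero_add, Complex.div_ofNat_im, zero_div] at him
    exact_mod_cast (mul_eq_zero.mp him).resolve_right hτ
  have hre := congrArg Complex.re h
  simp only [hk, zero_smul, add_zero, zsmul_eq_mul, mul_one, Complex.intCast_re,
    Complex.div_ofNat_re, Complex.one_re] at hre
  have : (2 * m : ℤ) = 1 := by exact_mod_cast (by linarith : (2 * m : ℝ) = 1)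
  omega

theorem quarter_add_quarter_ne_zero {τ : ℂ} (hτ : τ.im ≠ 0) :
    ((1 / 4 : ℂ) : Ell τ) + ((1 / 4 : ℂ) : Ell τ) ≠ 0 := by
  rw [← QuotientAddGroup.mk_add, Ne, QuotientAddGroup.eq_zero_iff]
  norm_num
  exact half_notMem_Lam hτ

theorem wsub_le_ker_snd (n : ℕ) (τ τ' : ℂ) :
    wsub n τ τ' ≤ (AddMonoidHom.snd (Fin (2 * n) → Ell τ) (Ell τ')).ker := by
  rw [wsub, AddSubgroup.closure_le, Set.singleton_subset_iff]
  rfl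

def Aq.lastCoord (n : ℕ) (τ τ' : ℂ) : Aq n τ τ' →+ Ell τ' :=
  QuotientAddGroup.lift _ _ (wsub_le_ker_snd n τ τ')

theorem Aq.lastCoord_mk (n : ℕ) (τ τ' : ℂ) (z : Aprime n τ τ') :
    Aq.lastCoord n τ τ' z = z.2 := rfl

theorem Aq.lastCoord_surjective (n : ℕ) (τ τ' : ℂ) :
    Function.Surjective (Aq.lastCoord n τ τ') :=
  fun e => ⟨((0, e) : Aprime n τ τ'), rfl⟩

theorem smap_snd (n : ℕ) (τ τ' : ℂ) (z : Aprime n τ τ') : (smap n τ τ' z).2 = -z.2 := rfl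

theorem rmap_snd (n : ℕ) (τ τ' : ℂ) (z : Aprime n τ τ') :
    (rmap n τ τ' z).2 = z.2 + cE' n τ' := rfl

theorem stmt_14_general (n : ℕ) (τ τ' : ℂ) (hτ' : τ'.im ≠ 0) :
    ∀ rbar sbar : Aq n τ τ' → Aq n τ τ',
      (∀ z : Aprime n τ τ',
        rbar (z : Aq n τ τ') = ((rmap n τ τ' z : Aprime n τ τ') : Aq n τ τ')) →
      (∀ z : Aprime n τ τ',
        sbar (z : Aq n τ τ') = ((smap n τ τ' z : Aprime n τ τ') : Aq n τ τ')) →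
      (¬ ∃ a : Aq n τ τ', ∀ x : Aq n τ τ', sbar x = x + a) ∧
      (¬ ∃ a : Aq n τ τ', ∀ x : Aq n τ τ', rbar (sbar x) = x + a) := by
  intro rbar sbar hr hs
  have hs_last : ∀ x, Aq.lastCoord n τ τ' (sbar x) = -Aq.lastCoord n τ τ' x + 0 := by
    intro x
    induction x using QuotientAddGroup.induction_on with | H z => ?_
    rw [hs, Aq.lastCoord_mk, Aq.lastCoord_mk, smap_snd, add_zero]
  have hrs_last :
      ∀ x, Aq.lastCoord n τ τ' (rbar (sbar x)) = -Aq.lastCoord n τ τ' x + cE' n τ' := by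
    intro x
    induction x using QuotientAddGroup.induction_on with | H z => ?_
    rw [hs, hr, Aq.lastCoord_mk, Aq.lastCoord_mk, rmap_snd, smap_snd]
  have hk := quarter_add_quarter_ne_zero hτ'
  exact ⟨not_exists_add_right_of_map_eq_neg_add _ (Aq.lastCoord_surjective n τ τ') hs_last hk,
    not_exists_add_right_of_map_eq_neg_add _ (Aq.lastCoord_surjective n τ τ') hrs_last hk⟩

/-- neither s̄ nor r̄ ∘ s̄ is a translation of A. -/
theorem stmt_14 (n : ℕ) (hn : 1 ≤ n) (τ τ' : ℂ) (hτ : τ.im ≠ 0) (hτ' : τ'.im ≠ 0) :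
    ∀ rbar sbar : Aq n τ τ' → Aq n τ τ',
      (∀ z : Aprime n τ τ',
        rbar (z : Aq n τ τ') = ((rmap n τ τ' z : Aprime n τ τ') : Aq n τ τ')) →
      (∀ z : Aprime n τ τ',
        sbar (z : Aq n τ τ') = ((smap n τ τ' z : Aprime n τ τ') : Aq n τ τ')) →
      (¬ ∃ a : Aq n τ τ', ∀ x : Aq n τ τ', sbar x = x + a) ∧
      (¬ ∃ a : Aq n τ τ', ∀ x : Aq n τ τ', rbar (sbar x) = x + a) :=
  stmt_14_general n τ τ' hτ'
end
end
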